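/- arXiv:2510.15176 — 5 statements merged into one kernel-verified Lean document; each statement's English description precedes it below -/
import Mathlib

section
/- Let X be a compact connected metric space and f : X → X a homeomorphism. Then f is chain-transitive if and only if for every x ∈ X and every ε > 0 there exists a closed ε-chain containing x, i.e. a finite sequence x₀, x₁, …, x_k with x₀ = x, d(f(x_i), x_{i+1}) < ε for all 0 ≤ i < k, and d(f(x_k), x₀) < ε. -/
/-- A homeomorphism of a compact connected metric space is chain-transitive
(no proper open set `U` with `f (closure U) ⊆ U`) if and only if every point
belongs to a closed `ε`-chain for every `ε > 0`. -/
theorem chainTransitive_iff_closed_chains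
    {X : Type*} [MetricSpace X] [CompactSpace X] [ConnectedSpace X]
    (f : X ≃ₜ X) :
    (¬ ∃ U : Set X, IsOpen U ∧ U ≠ ∅ ∧ U ≠ Set.univ ∧ ⇑f '' closure U ⊆ U) ↔
      (∀ x : X, ∀ ε : ℝ, 0 < ε → ∃ (k : ℕ) (c : ℕ → X),
        c 0 = x ∧ c (k + 1) = x ∧ ∀ i ≤ k, dist (f (c i)) (c (i + 1)) < ε) := by
  constructor
  · intro h x ε hε
    classical
    set V : Set X := {y | ∃ (k : ℕ) (c : ℕ → X),
        c 0 = x ∧ c (k + 1) = y ∧ ∀ i ≤ k, dist (f (c i)) (c (i + 1)) < ε} with hVdef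
    have hne : f x ∈ V := by
      refine ⟨0, fun i => if i = 0 then x else f x, by simp, by simp, ?_⟩
      intro i hi
      interval_cases i
      simpa using hε
    have hopen : IsOpen V := by
      rw [Metric.isOpen_iff]
      rintro y ⟨k, c, h0, hk, hc⟩
      have hlast : dist (f (c k)) y < ε := by
        have := hc k le_rfl; rwa [hk] at this
      refine ⟨ε - dist (f (c k)) y, by linarith, ?_⟩
      intro z hz
      rw [Metric.mem_ball] at hz
      refine ⟨k, Function.update c (k + 1) z, ?_, ?_, ?_⟩
      · rw [Function.update_of_ne (by omega)]; exact h0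
      · exact Function.update_self _ _ _
      · intro i hi
        rw [Function.update_of_ne (by omega : i ≠ k + 1)]
        rcases eq_or_lt_of_le hi with rfl | hlt
        · rw [Function.update_self]
          calc dist (f (c i)) z ≤ dist (f (c i)) y + dist y z := dist_triangle _ _ _
            _ < ε := by rw [dist_comm y z]; linarith
        · rw [Function.update_of_ne (by omega : i + 1 ≠ k + 1)]
          exact hc i hlt.le
    have hsub : ⇑f '' closure V ⊆ V := by
      obtain ⟨δ, hδ, hδ'⟩ := Metric.uniformContinuous_iff.mp
        (CompactSpace.uniformContinuous_of_continuous f.continuous) ε hε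
      rintro _ ⟨y, hy, rfl⟩
      obtain ⟨y', hy'V, hy'd⟩ := Metric.mem_closure_iff.mp hy δ hδ
      obtain ⟨k, c, h0, hk, hc⟩ := hy'V
      refine ⟨k + 1, Function.update c (k + 2) (f y), ?_, ?_, ?_⟩
      · rw [Function.update_of_ne (by omega)]; exact h0
      · show Function.update c (k + 2) (f y) (k + 1 + 1) = f y
        have hidx : k + 1 + 1 = k + 2 := by omega
        rw [hidx, Function.update_self]
      · intro i hi
        rw [Function.update_of_ne (by omega : i ≠ k + 2)]
        by_cases hik : i = k + 1
        · subst hik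
          have hidx : k + 1 + 1 = k + 2 := by omega
          rw [hidx, Function.update_self, hk]
          exact hδ' (by rw [dist_comm]; exact hy'd)
        · rw [Function.update_of_ne (by omega : i + 1 ≠ k + 2)]
          exact hc i (by omega)
    have hVuniv : V = Set.univ := by
      by_contra hne'
      refine h ⟨V, hopen, ?_, hne', hsub⟩
      intro h'
      rw [h'] at hne
      simp at hne
    have hxV : x ∈ V := hVuniv ▸ Set.mem_univ x
    exact hxV
  · rintro h ⟨U, hUo, hUne, hUuniv, hUsub⟩
    have hfr : (frontier U).Nonempty := by
      by_contra hf
      rw [Set.not_nonempty_iff_eq_empty] at hf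
      rcases isClopen_iff.mp (isClopen_iff_frontier_eq_empty.mpr hf) with h' | h'
      · exact hUne h'
      · exact hUuniv h'
    obtain ⟨x, hx⟩ := hfr
    have hK : IsCompact (⇑f '' closure U) :=
      (isClosed_closure.isCompact).image f.continuous
    obtain ⟨δ, hδ, hth⟩ := hK.exists_thickening_subset_open hUo hUsub
    obtain ⟨k, c, h0, hk, hc⟩ := h x δ hδ
    have key : ∀ i, i ≤ k + 1 → c i ∈ closure U ∧ (0 < i → c i ∈ U) := by
      intro i
      induction i with
      | zero =>
        intro _
        exact ⟨h0 ▸ frontier_subset_closure hx, by omega⟩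
      | succ i ih =>
        intro hi
        have hci : c i ∈ closure U := (ih (by omega)).1
        have hmem : c (i + 1) ∈ U := by
          apply hth
          rw [Metric.mem_thickening_iff]
          refine ⟨f (c i), ⟨c i, hci, rfl⟩, ?_⟩
          rw [dist_comm]
          exact hc i (by omega)
        exact ⟨subset_closure hmem, fun _ => hmem⟩
    have hxU : x ∈ U := by
      have := (key (k + 1) le_rfl).2 (by omega)
      rwa [hk] at this
    rw [hUo.frontier_eq] at hx
    exact hx.2 hxU
end

section
/- If f : X → X is a chain-transitive homeomorphism of a compact metric space, then for every n ≥ 1 the iterate fⁿ is also chain-transitive. -/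
/-- `f` is chain-transitive: every point lies on a closed `ε`-chain for every `ε > 0`. -/
def IsChainTransitive {X : Type*} [MetricSpace X] (f : X → X) : Prop :=
  ∀ x : X, ∀ ε : ℝ, 0 < ε → ∃ (k : ℕ) (c : ℕ → X),
    c 0 = x ∧ c (k + 1) = x ∧ ∀ i ≤ k, dist (f (c i)) (c (i + 1)) < ε

lemma key_chain_lemma {X : Type*} [MetricSpace X] [CompactSpace X] (f : X ≃ₜ X) :
    ∀ (n : ℕ) (ε : ℝ), 0 < ε → ∃ δ, 0 < δ ∧ δ ≤ ε ∧ ∀ (c : ℕ → X) (i : ℕ),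
      (∀ j < n, dist (f (c (i + j))) (c (i + j + 1)) < δ) →
      dist ((⇑f)^[n] (c i)) (c (i + n)) < ε := by
  intro n
  induction n with
  | zero =>
    intro ε hε
    exact ⟨ε, hε, le_refl _, fun c i _ => by simpa using hε⟩
  | succ n ih =>
    intro ε hε
    obtain ⟨η, hη, hη'⟩ := Metric.uniformContinuous_iff.mp
      (CompactSpace.uniformContinuous_of_continuous f.continuous) (ε / 2) (by positivity)
    obtain ⟨δ, hδ, hδle, hchain⟩ := ih (min η (ε / 2)) (by positivity)
    have hδhalf : δ ≤ ε / 2 := hδle.trans (min_le_right _ _)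
    refine ⟨δ, hδ, hδhalf.trans (by linarith), fun c i h => ?_⟩
    have h1 : dist ((⇑f)^[n] (c i)) (c (i + n)) < min η (ε / 2) :=
      hchain c i (fun j hj => h j (by omega))
    have h2 : dist (f ((⇑f)^[n] (c i))) (f (c (i + n))) < ε / 2 :=
      hη' (lt_of_lt_of_le h1 (min_le_left _ _))
    have h3 : dist (f (c (i + n))) (c (i + n + 1)) < δ := h n (by omega)
    have e : ((⇑f)^[n + 1] (c i)) = f ((⇑f)^[n] (c i)) := Function.iterate_succ_apply' _ _ _
    have e2 : i + (n + 1) = i + n + 1 := by omega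
    rw [e, e2]
    calc dist (f ((⇑f)^[n] (c i))) (c (i + n + 1))
        ≤ dist (f ((⇑f)^[n] (c i))) (f (c (i + n))) + dist (f (c (i + n))) (c (i + n + 1)) :=
          dist_triangle _ _ _
      _ < ε := by linarith

/-- If a homeomorphism of a compact metric space is chain-transitive, then so is
every iterate `f^[n]`, `n ≥ 1`. -/
theorem iterate_isChainTransitive
    {X : Type*} [MetricSpace X] [CompactSpace X]
    (f : X ≃ₜ X) (hf : IsChainTransitive ⇑f) (n : ℕ) (hn : 1 ≤ n) :
    IsChainTransitive ((⇑f)^[n]) := by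
  intro x ε hε
  obtain ⟨δ, hδ, hδε, hchain⟩ := key_chain_lemma f n ε hε
  obtain ⟨k, c, hc0, hck, hc⟩ := hf x δ hδ
  set cp : ℕ → X := fun j => c (j % (k + 1)) with hcp_def
  have hcp : ∀ i, dist (f (cp i)) (cp (i + 1)) < δ := by
    intro i
    have hr : i % (k + 1) < k + 1 := Nat.mod_lt _ (by omega)
    have e2 : cp (i + 1) = c ((i % (k + 1) + 1) % (k + 1)) := by
      simp only [hcp_def]
      rw [Nat.mod_add_mod]
    by_cases hrk : i % (k + 1) = k
    · have : (i % (k + 1) + 1) % (k + 1) = 0 := by rw [hrk]; exact Nat.mod_self _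
      rw [e2, this, hc0]
      simp only [hcp_def, hrk]
      rw [← hck]
      exact hc k le_rfl
    · have hlt : i % (k + 1) + 1 < k + 1 := by omega
      rw [e2, Nat.mod_eq_of_lt hlt]
      exact hc (i % (k + 1)) (by omega)
  refine ⟨k, fun j => cp (n * j), ?_, ?_, ?_⟩
  · simp [hcp_def, hc0]
  · show cp (n * (k + 1)) = x
    simp only [hcp_def]
    have : n * (k + 1) % (k + 1) = 0 := Nat.mul_mod_left _ _
    rw [this, hc0]
  · intro j hj
    show dist ((⇑f)^[n] (cp (n * j))) (cp (n * (j + 1))) < ε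
    have e : n * (j + 1) = n * j + n := by ring
    rw [e]
    exact hchain cp (n * j) (fun j' hj' => hcp _)
end

section
/- Let f : X → X be a chain-transitive homeomorphism of a compact connected metric space X, and let p : X̂ → X be a finite covering with X̂ compact and connected. If g : X̂ → X̂ is a lift of some iterate fⁿ (n ≥ 1), then g is chain-transitive. -/
/-!
Closed chains of `f` through `p z`, repeated periodically and sampled every `n` steps, give a
periodic `δ`-pseudo-orbit `b` of `f^[n]` of some period `L`. Since `p` is uniformly open on the
compact space `X'`, `b` lifts step by step to an `ε`-pseudo-orbit `d` of `g` starting at `z`.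
Distinct points of a fibre are uniformly far apart and `g` is injective, so the lift is determined
backwards: if `d (t + P) = d t` for a multiple `P` of `L`, then `d P = d 0`. The points `d (a * L)`
all lie in the finite fibre over `p z`, so two of them coincide and `d` closes up at `z`.
-/

open Metric Set Function

section PseudoOrbit

variable {X : Type*} [PseudoMetricSpace X]

def IsPseudoOrbit (f : X → X) (ε : ℝ) (c : ℕ → X) : Prop :=
  ∀ i, dist (f (c i)) (c (i + 1)) < ε

theorem IsPseudoOrbit.mono {f : X → X} {ε ε' : ℝ} {c : ℕ → X} (hc : IsPseudoOrbit f ε c)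
    (h : ε ≤ ε') : IsPseudoOrbit f ε' c :=
  fun i => (hc i).trans_le h

theorem UniformContinuous.exists_dist_iterate_lt {f : X → X} (hf : UniformContinuous f) (m : ℕ)
    {δ : ℝ} (hδ : 0 < δ) :
    ∃ η > 0, ∀ c, IsPseudoOrbit f η c → ∀ j, dist (f^[m] (c j)) (c (j + m)) < δ := by
  induction m generalizing δ with
  | zero => exact ⟨δ, hδ, fun c _ j => by simpa using hδ⟩
  | succ m ih =>
    obtain ⟨θ, hθ, hfθ⟩ := Metric.uniformContinuous_iff.mp hf (δ / 2) (half_pos hδ)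
    obtain ⟨η, hη, hηm⟩ := ih hθ
    refine ⟨min η (δ / 2), lt_min hη (half_pos hδ), fun c hc j => ?_⟩
    calc dist (f^[m + 1] (c j)) (c (j + (m + 1)))
        ≤ dist (f (f^[m] (c j))) (f (c (j + m))) + dist (f (c (j + m))) (c (j + m + 1)) := by
          rw [iterate_succ_apply']
          exact dist_triangle _ _ _
      _ < δ / 2 + δ / 2 :=
          add_lt_add (hfθ (hηm c (hc.mono (min_le_left _ _)) j))
            ((hc _).trans_le (min_le_right _ _))
      _ = δ := add_halves δ

end PseudoOrbit

section ChainTransitive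

variable {X : Type*} [MetricSpace X] {f : X → X}

theorem IsChainTransitive.exists_periodic_pseudoOrbit (hf : IsChainTransitive f) (x : X)
    {ε : ℝ} (hε : 0 < ε) :
    ∃ L > 0, ∃ c : ℕ → X, c 0 = x ∧ Periodic c L ∧ IsPseudoOrbit f ε c := by
  obtain ⟨k, c, hc0, hck, hc⟩ := hf x ε hε
  have hwrap : ∀ m ≤ k + 1, c (m % (k + 1)) = c m := by
    intro m hm
    rcases hm.lt_or_eq with hm | rfl
    · rw [Nat.mod_eq_of_lt hm]
    · rw [Nat.mod_self, hc0, hck]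
  refine ⟨k + 1, k.succ_pos, fun i => c (i % (k + 1)), by simpa using hc0, fun i => by simp,
    fun i => ?_⟩
  have hi : i % (k + 1) < k + 1 := Nat.mod_lt i k.succ_pos
  show dist (f (c (i % (k + 1)))) (c ((i + 1) % (k + 1))) < ε
  rw [← Nat.mod_add_mod, hwrap _ hi]
  exact hc _ (by omega)

theorem IsChainTransitive.exists_periodic_pseudoOrbit_iterate (hf : IsChainTransitive f)
    (hfu : UniformContinuous f) (n : ℕ) (x : X) {δ : ℝ} (hδ : 0 < δ) :
    ∃ L > 0, ∃ b : ℕ → X, b 0 = x ∧ Periodic b L ∧ IsPseudoOrbit f^[n] δ b := by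
  obtain ⟨η, hη, hηn⟩ := hfu.exists_dist_iterate_lt n hδ
  obtain ⟨L, hL, c, hc0, hcL, hc⟩ := hf.exists_periodic_pseudoOrbit x hη
  refine ⟨L, hL, fun i => c (i * n), by simpa using hc0, fun i => ?_, fun i => ?_⟩
  · simpa [add_mul, mul_comm L n] using hcL.nat_mul n (i * n)
  · simpa [add_mul] using hηn c hc (i * n)

end ChainTransitive

section LocalHomeomorph

variable {Y Z : Type*} [PseudoMetricSpace Y] [CompactSpace Y] [PseudoMetricSpace Z] {p : Y → Z}

theorem IsLocalHomeomorph.exists_pos_forall_injOn_ball (hp : IsLocalHomeomorph p) :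
    ∃ r > 0, ∀ y, InjOn p (ball y r) := by
  choose e he hpe using hp
  obtain ⟨r, hr, hball⟩ := lebesgue_number_lemma_of_metric isCompact_univ
    (fun y => (e y).open_source) (fun y _ => mem_iUnion.mpr ⟨y, he y⟩)
  refine ⟨r, hr, fun y => ?_⟩
  obtain ⟨w, hw⟩ := hball y (mem_univ y)
  rw [hpe w]
  exact (e w).injOn.mono hw

theorem IsOpenMap.exists_pos_forall_ball_subset_image_ball (hpo : IsOpenMap p) (hpc : Continuous p)
    {ε : ℝ} (hε : 0 < ε) : ∃ δ > 0, ∀ y, ball (p y) δ ⊆ p '' ball y ε := by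
  -- the pairs `(y, x)` with `x ∈ p '' ball y ε` form an open neighbourhood of the graph of `p`
  let U : Set (Y × Z) := Prod.map id p '' {q | dist q.1 q.2 < ε}
  have hU : IsOpen U :=
    IsOpenMap.id.prodMap hpo _ (isOpen_lt (continuous_fst.dist continuous_snd) continuous_const)
  have hgraph : range (fun y => (y, p y)) ⊆ U := by
    rintro _ ⟨y, rfl⟩
    exact ⟨(y, y), by simpa using hε, rfl⟩
  obtain ⟨δ, hδ, hδU⟩ :=
    (isCompact_range (continuous_id.prodMk hpc)).exists_thickening_subset_open hU hgraph
  refine ⟨δ, hδ, fun y x hx => ?_⟩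
  obtain ⟨⟨a, b⟩, hab, hyx⟩ : (y, x) ∈ U :=
    hδU (mem_thickening_iff.mpr ⟨(y, p y), mem_range_self y, by simpa [Prod.dist_eq] using hx⟩)
  obtain ⟨rfl, rfl⟩ := Prod.ext_iff.mp hyx
  exact ⟨b, by simpa [dist_comm] using hab, rfl⟩

end LocalHomeomorph

section Lift

variable {Y Z : Type*} [PseudoMetricSpace Y] {p : Y → Z} {F : Z → Z} {G : Y → Y}

theorem IsPseudoOrbit.exists_lift [PseudoMetricSpace Z] {δ ε : ℝ}
    (hlift : ∀ y, ball (p y) δ ⊆ p '' ball y ε) (hGF : ∀ y, p (G y) = F (p y)) {b : ℕ → Z}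
    (hb : IsPseudoOrbit F δ b) {y₀ : Y} (hy₀ : p y₀ = b 0) :
    ∃ d : ℕ → Y, d 0 = y₀ ∧ p ∘ d = b ∧ IsPseudoOrbit G ε d := by
  have hlift' : ∀ y x, x ∈ ball (p y) δ → ∃ y', y' ∈ ball y ε ∧ p y' = x :=
    fun y x hx => hlift y hx
  have : Nonempty Y := ⟨y₀⟩
  choose! up hup hpup using hlift'
  let d : ℕ → Y := fun i => Nat.rec y₀ (fun i y => up (G y) (b (i + 1))) i
  have hnext : ∀ i, p (d i) = b i → b (i + 1) ∈ ball (p (G (d i))) δ := by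
    intro i hi
    rw [mem_ball, hGF, hi, dist_comm]
    exact hb i
  have hpd : ∀ i, p (d i) = b i := by
    intro i
    induction i with
    | zero => exact hy₀
    | succ i ih => exact hpup _ _ (hnext i ih)
  refine ⟨d, rfl, funext hpd, fun i => ?_⟩
  rw [dist_comm]
  exact hup _ _ (hnext i (hpd i))

theorem IsPseudoOrbit.apply_period_eq_apply_zero_of_lift (hG : Injective G) {r : ℝ}
    (hinj : ∀ y, InjOn p (ball y r)) (hGF : ∀ y, p (G y) = F (p y)) {d : ℕ → Y}
    (hd : IsPseudoOrbit G r d) {P : ℕ} (hdP : ∀ i, p (d (i + P)) = p (d i)) {t : ℕ}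
    (ht : d (t + P) = d t) : d P = d 0 := by
  -- `G (d i)` and `G (d (i + P))` lie in one fibre and are both `r`-close to `d (i + 1)`
  have hstep : ∀ i, d (i + 1 + P) = d (i + 1) → d (i + P) = d i := by
    intro i hi
    refine hG (hinj (d (i + 1)) ?_ (hd i) (by rw [hGF, hGF, hdP]))
    rw [mem_ball, ← hi, add_right_comm]
    exact hd (i + P)
  induction t with
  | zero => simpa using ht
  | succ t ih => exact ih (hstep t ht)

end Lift

theorem lift_of_iterate_isChainTransitive_general
    {X X' : Type*} [MetricSpace X] [CompactSpace X]
    [MetricSpace X'] [CompactSpace X']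
    (p : X' → X) (hp : IsCoveringMap p)
    (hfin : ∀ x : X, (p ⁻¹' {x}).Finite)
    (f : X ≃ₜ X) (hf : IsChainTransitive ⇑f)
    (n : ℕ)
    (g : X' ≃ₜ X') (hlift : ∀ z : X', p (g z) = (⇑f)^[n] (p z)) :
    IsChainTransitive ⇑g := by
  intro z ε hε
  obtain ⟨r, hr, hinj⟩ := hp.isLocalHomeomorph.exists_pos_forall_injOn_ball
  obtain ⟨δ, hδ, hδε⟩ :=
    hp.isOpenMap.exists_pos_forall_ball_subset_image_ball hp.continuous (lt_min hε hr)
  obtain ⟨L, hL, b, hb0, hbL, hb⟩ := hf.exists_periodic_pseudoOrbit_iterate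
    (CompactSpace.uniformContinuous_of_continuous f.continuous) n (p z) hδ
  obtain ⟨d, hd0, rfl, hd⟩ := hb.exists_lift hδε hlift hb0.symm
  obtain ⟨a, a', haa', hda⟩ := (hfin (p z)).exists_lt_map_eq_of_forall_mem
    (f := fun a => d (a * L)) fun a => by simpa [hd0] using hbL.nat_mul_eq a
  have hP : 0 < (a' - a) * L := Nat.mul_pos (Nat.sub_pos_of_lt haa') hL
  have hdP : d ((a' - a) * L) = d 0 :=
    (hd.mono (min_le_right _ _)).apply_period_eq_apply_zero_of_lift g.injective hinj hlift
      (hbL.nat_mul _) (t := a * L) (by rw [← add_mul, Nat.add_sub_cancel' haa'.le, hda])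
  refine ⟨(a' - a) * L - 1, d, hd0, ?_, fun i _ => (hd.mono (min_le_left _ _)) i⟩
  rw [Nat.sub_add_cancel hP, hdP, hd0]

/-- If `f` is a chain-transitive homeomorphism of a compact connected metric space,
`p : X̂ → X` is a finite covering of compact connected metric spaces, and `g` is a lift
of the iterate `f^[n]` (`n ≥ 1`) to `X̂`, then `g` is chain-transitive. -/
theorem lift_of_iterate_isChainTransitive
    {X X' : Type*} [MetricSpace X] [CompactSpace X] [ConnectedSpace X]
    [MetricSpace X'] [CompactSpace X'] [ConnectedSpace X']
    (p : X' → X) (hp : IsCoveringMap p) (hsurj : Function.Surjective p)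
    (hfin : ∀ x : X, (p ⁻¹' {x}).Finite)
    (f : X ≃ₜ X) (hf : IsChainTransitive ⇑f)
    (n : ℕ) (hn : 1 ≤ n)
    (g : X' ≃ₜ X') (hlift : ∀ z : X', p (g z) = (⇑f)^[n] (p z)) :
    IsChainTransitive ⇑g :=
  lift_of_iterate_isChainTransitive_general p hp hfin f hf n g hlift
end

section
/- Let h : X → X be a homeomorphism of a compact metric space X such that every point of X is nonwandering for h and X is connected. Then h is chain-transitive. -/
section Aux

variable {X : Type*} [MetricSpace X] (h : X ≃ₜ X) (ε : ℝ)

/-- There is an ε-chain (of length ≥ 1) from `x` to `y`. -/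
def HasChain (x y : X) : Prop :=
  ∃ (k : ℕ) (c : ℕ → X), 1 ≤ k ∧ c 0 = x ∧ c k = y ∧
    ∀ i < k, dist (h (c i)) (c (i + 1)) < ε

lemma hasChain_append {x z w : X} (hc : HasChain h ε x z)
    (hw : dist (h z) w < ε) : HasChain h ε x w := by
  obtain ⟨k, c, hk, h0, hkz, hlink⟩ := hc
  refine ⟨k + 1, fun i => if i ≤ k then c i else w, le_trans hk (Nat.le_succ k), ?_, ?_, ?_⟩
  · simp [Nat.zero_le k, h0]
  · simp
  · intro i hi
    rcases lt_or_ge i k with hik | hik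
    · have h1 : i ≤ k := le_of_lt hik
      have h2 : i + 1 ≤ k := hik
      simp only [h1, h2, if_true]
      exact hlink i hik
    · have : i = k := le_antisymm (Nat.lt_succ_iff.mp hi) hik
      subst this
      simp only [le_refl, if_true, Nat.not_succ_le_self i, if_false]
      rw [hkz]; exact hw

lemma hasChain_self (x : X) (hε : 0 < ε) : HasChain h ε x (h x) := by
  refine ⟨1, fun i => if i = 0 then x else h x, le_refl 1, by simp, by simp, ?_⟩
  intro i hi
  interval_cases i
  simpa using hε

lemma hasChain_open {x y : X} (hc : HasChain h ε x y) :
    ∃ r > 0, ∀ y', dist y y' < r → HasChain h ε x y' := by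
  obtain ⟨k, c, hk, h0, hkz, hlink⟩ := hc
  have hlast : dist (h (c (k - 1))) (c k) < ε := by
    have := hlink (k - 1) (by omega)
    have hkk : k - 1 + 1 = k := by omega
    rwa [hkk] at this
  refine ⟨ε - dist (h (c (k - 1))) (c k), by linarith, fun y' hy' => ?_⟩
  refine ⟨k, fun i => if i < k then c i else y', hk, ?_, ?_, ?_⟩
  · simp only [show (0:ℕ) < k from hk, if_true, h0]
  · simp
  · intro i hi
    rcases lt_or_ge i (k - 1) with hik | hik
    · have h2 : i + 1 < k := by omega
      simp only [hi, h2, if_true]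
      exact hlink i hi
    · have : i = k - 1 := by omega
      subst this
      have h2 : ¬ (k - 1 + 1 < k) := by omega
      simp only [hi, if_true, h2, if_false]
      rw [hkz] at hy'
      calc dist (h (c (k - 1))) y'
          ≤ dist (h (c (k - 1))) y + dist y y' := by
            rw [← hkz]; exact dist_triangle _ _ _
        _ < dist (h (c (k - 1))) y + (ε - dist (h (c (k - 1))) y) := by
            have := hlast; rw [hkz] at this; linarith
        _ = ε := by ring

lemma hasChain_iterate {x : X} (u : X) (hu : HasChain h ε x (h u)) (hε : 0 < ε) :
    ∀ j : ℕ, HasChain h ε x ((⇑h)^[j + 1] u) := by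
  intro j
  induction j with
  | zero => simpa using hu
  | succ n ih =>
      have : dist (h ((⇑h)^[n + 1] u)) ((⇑h)^[n + 2] u) < ε := by
        rw [show (⇑h)^[n + 2] u = h ((⇑h)^[n+1] u) from Function.iterate_succ_apply' _ _ _]
        simpa using hε
      exact hasChain_append h ε ih this

end Aux

/-- A homeomorphism of a compact connected metric space all of whose points are
nonwandering is chain-transitive: any two points are connected by ε-chains for all ε > 0. -/
theorem nonwandering_implies_chainTransitive
    {X : Type*} [MetricSpace X] [CompactSpace X] [ConnectedSpace X]
    (h : X ≃ₜ X)
    (hnw : ∀ x : X, ∀ U : Set X, IsOpen U → x ∈ U →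
      ∃ n : ℕ, 1 ≤ n ∧ ((⇑h)^[n] '' U ∩ U).Nonempty) :
    ∀ x y : X, ∀ ε : ℝ, 0 < ε →
      ∃ (k : ℕ) (c : ℕ → X), 1 ≤ k ∧ c 0 = x ∧ c k = y ∧
        ∀ i < k, dist (h (c i)) (c (i + 1)) < ε := by
  intro x y ε hε
  -- uniform continuity of h
  have huc : UniformContinuous (⇑h) := CompactSpace.uniformContinuous_of_continuous h.continuous
  obtain ⟨δ, hδ, hδc⟩ := Metric.uniformContinuous_iff.mp huc (ε / 2) (by linarith)
  set ρ : ℝ := min (δ / 2) (ε / 2) with hρdef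
  have hρ : 0 < ρ := lt_min (by linarith) (by linarith)
  set S : Set X := {z | HasChain h ε x z} with hS
  -- S is open
  have hopen : IsOpen S := by
    rw [Metric.isOpen_iff]
    intro z hz
    obtain ⟨r, hr, hball⟩ := hasChain_open h ε hz
    exact ⟨r, hr, fun w hw => hball w (by rw [dist_comm]; exact Metric.mem_ball.mp hw)⟩
  -- complement of S is open
  have hcopen : IsOpen Sᶜ := by
    rw [Metric.isOpen_iff]
    intro z hz
    refine ⟨ρ, hρ, fun w hw => ?_⟩
    by_contra hwS
    apply hz
    simp only [Set.mem_compl_iff, not_not] at hwS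
    -- w ∈ S, dist w z < ρ ; show z ∈ S
    obtain ⟨n, hn1, v, ⟨u, hu, huv⟩, hvU⟩ := hnw z (Metric.ball z ρ) Metric.isOpen_ball
      (Metric.mem_ball_self hρ)
    have hdzu : dist w u < δ := by
      have h1 : dist w z < ρ := Metric.mem_ball.mp hw
      have h2 : dist u z < ρ := Metric.mem_ball.mp hu
      calc dist w u ≤ dist w z + dist z u := dist_triangle _ _ _
        _ < ρ + ρ := by rw [dist_comm z u]; linarith
        _ ≤ δ / 2 + δ / 2 := add_le_add (min_le_left _ _) (min_le_left _ _)
        _ = δ := by ring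
    have hhw : dist (h w) (h u) < ε / 2 := hδc hdzu
    have hvz : dist ((⇑h)^[n] u) z < ρ := by rw [huv]; exact Metric.mem_ball.mp hvU
    rcases eq_or_lt_of_le hn1 with hn | hn
    · -- n = 1 : go directly from w to z
      have : dist (h w) z < ε := by
        have h2 : dist (h u) z < ρ := by rw [← hn] at hvz; simpa using hvz
        have hρε : ρ ≤ ε / 2 := min_le_right _ _
        calc dist (h w) z ≤ dist (h w) (h u) + dist (h u) z := dist_triangle _ _ _
          _ < ε / 2 + ρ := by linarith
          _ ≤ ε := by linarith
      exact hasChain_append h ε hwS this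
    · -- n ≥ 2
      have hchain1 : HasChain h ε x (h u) :=
        hasChain_append h ε hwS (by linarith)
      have hchain : HasChain h ε x ((⇑h)^[n - 1] u) := by
        have := hasChain_iterate h ε u hchain1 hε (n - 2)
        rwa [show n - 2 + 1 = n - 1 by omega] at this
      have hlast : dist (h ((⇑h)^[n - 1] u)) z < ε := by
        rw [show h ((⇑h)^[n-1] u) = (⇑h)^[n] u by
          conv_rhs => rw [show n = n - 1 + 1 by omega]
          rw [Function.iterate_succ_apply']]
        have hρε : ρ ≤ ε / 2 := min_le_right _ _
        linarith
      exact hasChain_append h ε hchain hlast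
  -- S is nonempty, hence S = univ
  have hne : S.Nonempty := ⟨h x, hasChain_self h ε x hε⟩
  have : S = Set.univ := IsClopen.eq_univ ⟨isOpen_compl_iff.mp hcopen, hopen⟩ hne
  have hy : y ∈ S := this ▸ Set.mem_univ y
  exact hy
end

section
/- Let F be a finite closed ε-chain for a homeomorphism h of a compact metric space, i.e. a circularly ordered finite set x₀, …, x_k with d(h(x_i), x_{i+1}) < ε for all i (indices mod k+1). If F is minimal, meaning no proper circularly ordered subset of F is a closed ε-chain for h, then for every i the point h(x_i) is within ε only of x_{i+1} among the points of F. -/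
/-- `c 0, …, c k` is a closed `ε`-chain for `h`: cyclically, `d(h (c i), c (i+1)) < ε`. -/
def IsClosedChain {X : Type*} [MetricSpace X] (h : X → X) (ε : ℝ) (k : ℕ) (c : ℕ → X) : Prop :=
  ∀ i ≤ k, dist (h (c i)) (c ((i + 1) % (k + 1))) < ε

/-- If `c 0, …, c k` is a minimal closed `ε`-chain for a homeomorphism `h` of a compact
metric space (no proper circularly ordered subset of it is a closed `ε`-chain), then for
every `i`, among the points of the chain, `h (c i)` is within `ε` only of the next point
`c ((i+1) % (k+1))`. -/
theorem minimal_closed_chain_unique_successor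
    {X : Type*} [MetricSpace X] [CompactSpace X]
    (h : X ≃ₜ X) (ε : ℝ) (hε : 0 < ε) (k : ℕ) (c : ℕ → X)
    (hchain : IsClosedChain ⇑h ε k c)
    (hinj : ∀ i ≤ k, ∀ j ≤ k, c i = c j → i = j)
    (hmin : ¬ ∃ (m : ℕ) (j : ℕ → ℕ), m < k ∧ (∀ i ≤ m, j i ≤ k) ∧
      (∃ r : ℕ, StrictMonoOn (fun i => (j i + r) % (k + 1)) (Set.Iic m)) ∧
      IsClosedChain ⇑h ε m (fun i => c (j i))) :
    ∀ i ≤ k, ∀ l ≤ k, dist (h (c i)) (c l) < ε → l = (i + 1) % (k + 1) := by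
  intro i hi l hl hd
  rcases Nat.eq_zero_or_pos k with hk0 | hk0
  · subst hk0; omega
  by_contra hne
  set n := k + 1 with hn
  set m := (i + n - l) % n with hmdef
  have hmk : m < n := Nat.mod_lt _ (by omega)
  have hji : (l + m) % n = i := by
    have h1 : (l + m) % n = (l + (i + n - l)) % n := by
      rw [hmdef, Nat.add_mod_mod]
    have h2 : l + (i + n - l) = i + n := by omega
    rw [h1, h2, Nat.add_mod_right, Nat.mod_eq_of_lt (by omega)]
  have hmlt : m < k := by
    rcases Nat.lt_or_ge m k with hx | hx
    · exact hx
    have hmk' : m = k := by omega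
    exfalso; apply hne
    have h3 : (l + m + 1) % n = (i + 1) % n := by
      rw [← Nat.mod_add_mod, hji]
    rw [hmk'] at h3
    have h4 : l + k + 1 = l + n := by omega
    rw [h4, Nat.add_mod_right, Nat.mod_eq_of_lt (by omega)] at h3
    exact h3
  apply hmin
  refine ⟨m, fun i' => (l + i') % n, hmlt,
    fun i' _ => Nat.lt_succ_iff.mp (Nat.mod_lt _ (by omega)), ⟨n - l, ?_⟩, ?_⟩
  · intro a ha b hb hab
    simp only [Set.mem_Iic] at ha hb
    have e : ∀ x ≤ m, ((l + x) % n + (n - l)) % n = x := by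
      intro x hx
      rw [Nat.mod_add_mod]
      have hx2 : l + x + (n - l) = x + n := by omega
      rw [hx2, Nat.add_mod_right, Nat.mod_eq_of_lt (by omega)]
    simpa only [e a ha, e b hb] using hab
  · intro i' hi'
    simp only
    rcases Nat.lt_or_ge i' m with hlt | hge
    · have h5 : (i' + 1) % (m + 1) = i' + 1 := Nat.mod_eq_of_lt (by omega)
      have h6 : (l + (i' + 1)) % n = ((l + i') % n + 1) % n := by
        rw [Nat.mod_add_mod, ← Nat.add_assoc]
      rw [h5, h6]
      exact hchain _ (Nat.lt_succ_iff.mp (Nat.mod_lt _ (by omega)))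
    · have hi'm : i' = m := by omega
      subst hi'm
      rw [Nat.mod_self, Nat.add_zero, Nat.mod_eq_of_lt (show l < n by omega), hji]
      exact hd
end
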